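/- Let X and Y be centered Gaussian random vectors in ℝⁿ with covariance matrices C^X and C^Y. Fix positive weights w₁,…,w_n > 0 and let f(x) = log Σ_{i=1}ⁿ w_i e^{x_i}. If C^X_{ii} = C^Y_{ii} for every i, and C^X_{ij} ≥ C^Y_{ij} for every i ≠ j, then E[f(Y)] ≥ E[f(X)]. -/

import Mathlib

open MeasureTheory ProbabilityTheory

/-- The standard Gaussian measure on `ℝⁿ` (product of `n` standard Gaussians). -/
noncomputable def stdGaussianPi (n : ℕ) : Measure (Fin n → ℝ) :=
  Measure.pi fun _ => gaussianReal 0 1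

/-- A measure `μ` on `ℝⁿ` is the law of a centered Gaussian random vector with
covariance matrix `C` iff it is the pushforward of the standard Gaussian measure
under a linear map `A` with `A * Aᵀ = C`. -/
def IsCenteredGaussian (n : ℕ) (μ : Measure (Fin n → ℝ))
    (C : Matrix (Fin n) (Fin n) ℝ) : Prop :=
  ∃ A : Matrix (Fin n) (Fin n) ℝ, C = A * A.transpose ∧ μ = (stdGaussianPi n).map A.mulVec

/-!
Write `X = P ξ` and `Y = Q ξ` for one standard Gaussian vector `ξ`, with `P = [A 0]` and
`Q = [0 B]`, so that `P Qᵀ = 0`, and interpolate `Z θ = sin θ • P ξ + cos θ • Q ξ`. Gaussian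
integration by parts turns `d/dθ E[f (Z θ)]` into
`sin θ cos θ ∑ᵢⱼ (C^X - C^Y)ᵢⱼ E[∂ᵢ∂ⱼ f (Z θ)]`, and the Hessian of `f` is `diag p - p pᵀ` with
`p` the softmax of `Z θ`. The diagonal terms cancel because the variances agree, and the
off-diagonal ones are `≤ 0`, so `θ ↦ E[f (Z θ)]` decreases on `[0, π/2]`, from `E[f Y]` to
`E[f X]`.
-/

open Real Function Matrix

noncomputable section

section LogSumExp

variable {ι : Type*} [Fintype ι] {w : ι → ℝ}

def logSumExp (w x : ι → ℝ) : ℝ := log (∑ i, w i * exp (x i))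

def softmax (w x : ι → ℝ) (i : ι) : ℝ := w i * exp (x i) / ∑ j, w j * exp (x j)

lemma sum_mul_exp_pos [Nonempty ι] (hw : ∀ i, 0 < w i) (x : ι → ℝ) :
    0 < ∑ i, w i * exp (x i) :=
  Finset.sum_pos (fun i _ ↦ mul_pos (hw i) (exp_pos _)) Finset.univ_nonempty

lemma softmax_nonneg (hw : ∀ i, 0 ≤ w i) (x : ι → ℝ) (i : ι) : 0 ≤ softmax w x i :=
  div_nonneg (mul_nonneg (hw i) (exp_nonneg _))
    (Finset.sum_nonneg fun j _ ↦ mul_nonneg (hw j) (exp_nonneg _))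

lemma sum_softmax [Nonempty ι] (hw : ∀ i, 0 < w i) (x : ι → ℝ) : ∑ i, softmax w x i = 1 := by
  simp only [softmax, ← Finset.sum_div]
  exact div_self (sum_mul_exp_pos hw x).ne'

lemma softmax_le_one [Nonempty ι] (hw : ∀ i, 0 < w i) (x : ι → ℝ) (i : ι) :
    softmax w x i ≤ 1 := by
  rw [← sum_softmax hw x]
  exact Finset.single_le_sum (fun j _ ↦ softmax_nonneg (fun j ↦ (hw j).le) x j)
    (Finset.mem_univ i)

lemma abs_softmax_le_one [Nonempty ι] (hw : ∀ i, 0 < w i) (x : ι → ℝ) (i : ι) :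
    |softmax w x i| ≤ 1 :=
  abs_le.2 ⟨by linarith [softmax_nonneg (fun j ↦ (hw j).le) x i], softmax_le_one hw x i⟩

lemma abs_sum_softmax_mul_le [Nonempty ι] (hw : ∀ i, 0 < w i) (x v : ι → ℝ) :
    |∑ i, softmax w x i * v i| ≤ ‖v‖ :=
  calc |∑ i, softmax w x i * v i| ≤ ∑ i, softmax w x i * ‖v‖ := by
        refine (Finset.abs_sum_le_sum_abs _ _).trans (Finset.sum_le_sum fun i _ ↦ ?_)
        rw [abs_mul, abs_of_nonneg (softmax_nonneg (fun j ↦ (hw j).le) x i), ← norm_eq_abs]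
        exact mul_le_mul_of_nonneg_left (norm_le_pi_norm v i)
          (softmax_nonneg (fun j ↦ (hw j).le) x i)
    _ = ‖v‖ := by rw [← Finset.sum_mul, sum_softmax hw, one_mul]

lemma continuous_softmax [Nonempty ι] (hw : ∀ i, 0 < w i) (i : ι) :
    Continuous fun x ↦ softmax w x i := by
  unfold softmax
  exact Continuous.div (by fun_prop) (by fun_prop) fun x ↦ (sum_mul_exp_pos hw x).ne'

lemma logSumExp_le_add_norm_sub [Nonempty ι] (hw : ∀ i, 0 < w i) (x y : ι → ℝ) :
    logSumExp w x ≤ logSumExp w y + ‖x - y‖ := by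
  have hsum : ∑ i, w i * exp (x i) ≤ exp ‖x - y‖ * ∑ i, w i * exp (y i) := by
    rw [Finset.mul_sum]
    refine Finset.sum_le_sum fun i _ ↦ ?_
    have hi : x i - y i ≤ ‖x - y‖ := (le_abs_self _).trans (norm_le_pi_norm (x - y) i)
    calc w i * exp (x i) ≤ w i * exp (‖x - y‖ + y i) := by
          gcongr
          · exact (hw i).le
          · linarith
      _ = exp ‖x - y‖ * (w i * exp (y i)) := by rw [exp_add]; ring
  unfold logSumExp
  calc log (∑ i, w i * exp (x i)) ≤ log (exp ‖x - y‖ * ∑ i, w i * exp (y i)) :=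
        log_le_log (sum_mul_exp_pos hw x) hsum
    _ = log (∑ i, w i * exp (y i)) + ‖x - y‖ := by
        rw [log_mul (exp_ne_zero _) (sum_mul_exp_pos hw y).ne', log_exp, add_comm]

lemma abs_logSumExp_sub_le [Nonempty ι] (hw : ∀ i, 0 < w i) (x y : ι → ℝ) :
    |logSumExp w x - logSumExp w y| ≤ ‖x - y‖ := by
  have h₁ := logSumExp_le_add_norm_sub hw x y
  have h₂ := logSumExp_le_add_norm_sub hw y x
  rw [norm_sub_rev] at h₂
  exact abs_sub_le_iff.2 ⟨by linarith, by linarith⟩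

lemma continuous_logSumExp [Nonempty ι] (hw : ∀ i, 0 < w i) : Continuous (logSumExp w) := by
  unfold logSumExp
  exact Continuous.log (by fun_prop) fun x ↦ (sum_mul_exp_pos hw x).ne'

section Paths

variable {x : ℝ → ι → ℝ} {x' : ι → ℝ} {t : ℝ}

lemma hasDerivAt_sum_mul_exp (hx : ∀ i, HasDerivAt (fun s ↦ x s i) (x' i) t) :
    HasDerivAt (fun s ↦ ∑ i, w i * exp (x s i)) (∑ i, w i * exp (x t i) * x' i) t :=
  HasDerivAt.fun_sum fun i _ ↦ by simpa only [mul_assoc] using ((hx i).exp.const_mul (w i))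

lemma hasDerivAt_logSumExp [Nonempty ι] (hw : ∀ i, 0 < w i)
    (hx : ∀ i, HasDerivAt (fun s ↦ x s i) (x' i) t) :
    HasDerivAt (fun s ↦ logSumExp w (x s)) (∑ i, softmax w (x t) i * x' i) t := by
  refine ((hasDerivAt_sum_mul_exp hx).log (sum_mul_exp_pos hw (x t)).ne').congr_deriv ?_
  simp only [softmax, Finset.sum_div]
  exact Finset.sum_congr rfl fun i _ ↦ by ring

lemma hasDerivAt_softmax [Nonempty ι] (hw : ∀ i, 0 < w i) (i : ι)
    (hx : ∀ i, HasDerivAt (fun s ↦ x s i) (x' i) t) :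
    HasDerivAt (fun s ↦ softmax w (x s) i)
      (softmax w (x t) i * (x' i - ∑ j, softmax w (x t) j * x' j)) t := by
  have hS := (sum_mul_exp_pos hw (x t)).ne'
  have hnum : HasDerivAt (fun s ↦ w i * exp (x s i)) (w i * exp (x t i) * x' i) t := by
    simpa only [mul_assoc] using ((hx i).exp.const_mul (w i))
  refine (hnum.div (hasDerivAt_sum_mul_exp hx) hS).congr_deriv ?_
  have hmean : ∑ j, softmax w (x t) j * x' j
      = (∑ j, w j * exp (x t j) * x' j) / ∑ j, w j * exp (x t j) := by
    simp only [softmax, Finset.sum_div]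
    exact Finset.sum_congr rfl fun j _ ↦ by ring
  rw [hmean, softmax]
  field_simp

end Paths

end LogSumExp

section GaussianIntegrationByParts

lemma hasDerivAt_gaussianPDFReal_zero_one (t : ℝ) :
    HasDerivAt (gaussianPDFReal 0 1) (-t * gaussianPDFReal 0 1 t) t := by
  have h : HasDerivAt (fun s : ℝ ↦ -(s - 0) ^ 2 / (2 * ((1 : NNReal) : ℝ))) (-t) t := by
    refine ((((hasDerivAt_id' t).sub_const 0).pow 2).neg.div_const _).congr_deriv ?_
    simp only [Nat.cast_ofNat, sub_zero, Nat.add_one_sub_one, pow_one, mul_one, NNReal.coe_one]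
    ring
  rw [gaussianPDFReal_def]
  exact (h.exp.const_mul _).congr_deriv (by ring)

lemma integrable_mul_gaussianPDFReal_zero_one :
    Integrable (fun t : ℝ ↦ t * gaussianPDFReal 0 1 t) := by
  have h := (memLp_id_gaussianReal (μ := 0) (v := 1) 1).integrable le_rfl
  rw [gaussianReal_of_var_ne_zero 0 one_ne_zero, integrable_withDensity_iff_integrable_smul'
    (measurable_gaussianPDF 0 1) (ae_of_all _ fun _ ↦ gaussianPDF_lt_top)] at h
  refine h.congr (ae_of_all _ fun t ↦ ?_)
  simp [gaussianPDF, mul_comm, gaussianPDFReal_nonneg]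

/-- Gaussian integration by parts: the density `φ` satisfies `φ' = -t φ`. -/
lemma integral_mul_gaussianReal_eq_integral_deriv {q q' : ℝ → ℝ}
    (hq : ∀ t, HasDerivAt q (q' t) t) {C C' : ℝ} (hqC : ∀ t, |q t| ≤ C)
    (hq'C : ∀ t, |q' t| ≤ C') :
    ∫ t, t * q t ∂gaussianReal 0 1 = ∫ t, q' t ∂gaussianReal 0 1 := by
  set φ := gaussianPDFReal 0 1
  have hq_meas : AEStronglyMeasurable q :=
    (continuous_iff_continuousAt.2 fun t ↦ (hq t).continuousAt).aestronglyMeasurable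
  have hq'_eq : q' = deriv q := funext fun t ↦ (hq t).deriv.symm
  have hq'_meas : AEStronglyMeasurable q' := hq'_eq ▸ (measurable_deriv q).aestronglyMeasurable
  have hφ := integrable_gaussianPDFReal 0 1
  have hparts := integral_mul_deriv_eq_deriv_mul_of_integrable (u := q) (v := φ)
    (fun t _ ↦ hq t) (fun t _ ↦ hasDerivAt_gaussianPDFReal_zero_one t)
    (integrable_mul_gaussianPDFReal_zero_one.neg.bdd_mul hq_meas
      (ae_of_all _ fun t ↦ hqC t) |>.congr (ae_of_all _ fun t ↦ by simp))
    (hφ.bdd_mul hq'_meas (ae_of_all _ fun t ↦ hq'C t))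
    (hφ.bdd_mul hq_meas (ae_of_all _ fun t ↦ hqC t))
  rw [integral_gaussianReal_eq_integral_smul one_ne_zero,
    integral_gaussianReal_eq_integral_smul one_ne_zero]
  calc ∫ t, φ t • (t * q t) = -∫ t, q t * (-t * φ t) := by
        rw [← integral_neg]; congr 1; ext t; simp only [smul_eq_mul]; ring
    _ = ∫ t, φ t • q' t := by
        rw [hparts, neg_neg]; congr 1; ext t; simp only [smul_eq_mul]; ring

end GaussianIntegrationByParts

section Update

variable {κ : Type*} [Fintype κ] [DecidableEq κ] {X : κ → Type*} [∀ k, MeasurableSpace (X k)]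
  (μ : ∀ k, Measure (X k)) [∀ k, IsProbabilityMeasure (μ k)] (k : κ)

lemma measurePreserving_update :
    MeasurePreserving (fun p : (∀ k, X k) × X k ↦ update p.1 k p.2)
      ((Measure.pi μ).prod (μ k)) (Measure.pi μ) := by
  refine ⟨measurable_update', (Measure.pi_eq fun s hs ↦ ?_).symm⟩
  have hpre : (fun p : (∀ k, X k) × X k ↦ update p.1 k p.2) ⁻¹' Set.univ.pi s
      = Set.univ.pi (update s k Set.univ) ×ˢ s k := by
    ext ⟨x, t⟩
    simp only [Set.mem_preimage, Set.mem_univ_pi, Set.mem_prod]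
    constructor
    · intro h
      refine ⟨fun i ↦ ?_, by simpa using h k⟩
      rcases eq_or_ne i k with rfl | hi
      · simp
      · simpa [hi] using h i
    · rintro ⟨hx, ht⟩ i
      rcases eq_or_ne i k with rfl | hi
      · simpa using ht
      · simpa [hi] using hx i
  rw [Measure.map_apply measurable_update' (MeasurableSet.univ_pi hs), hpre, Measure.prod_prod,
    Measure.pi_pi, ← Finset.mul_prod_erase _ _ (Finset.mem_univ k),
    ← Finset.mul_prod_erase _ _ (Finset.mem_univ k), Finset.prod_congr rfl fun i hi ↦ by
      rw [update_of_ne (Finset.ne_of_mem_erase hi)]]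
  simp [mul_comm]

lemma integral_pi_eq_integral_integral_update {E : Type*} [NormedAddCommGroup E]
    [NormedSpace ℝ E] {f : (∀ k, X k) → E} (hf : Integrable f (Measure.pi μ)) :
    ∫ x, f x ∂Measure.pi μ = ∫ x, ∫ t, f (update x k t) ∂μ k ∂Measure.pi μ := by
  have hmp := measurePreserving_update μ k
  calc ∫ x, f x ∂Measure.pi μ
      = ∫ p, f (update p.1 k p.2) ∂(Measure.pi μ).prod (μ k) := by
        rw [← integral_map hmp.measurable.aemeasurable (by rw [hmp.map_eq]; exact hf.1), hmp.map_eq]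
    _ = _ := integral_prod _ ((hmp.integrable_comp hf.1).2 hf)

end Update

-- `stdGaussianPi n` is `γ[Fin n]`.
local notation "γ[" κ "]" => Measure.pi fun _ : κ => gaussianReal 0 1

lemma Matrix.continuous_mulVec {R ι κ : Type*} [Fintype κ] [TopologicalSpace R]
    [NonUnitalNonAssocSemiring R] [ContinuousAdd R] [ContinuousMul R] (M : Matrix ι κ R) :
    Continuous M.mulVec :=
  continuous_const.matrix_mulVec continuous_id

section StdGaussian

variable {ι κ : Type*} [Fintype κ]

lemma integrable_eval_stdGaussian (k : κ) : Integrable (fun ξ : κ → ℝ ↦ ξ k) γ[κ] :=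
  integrable_eval ((memLp_id_gaussianReal 1).integrable le_rfl)

lemma integrable_mulVec_stdGaussian [Fintype ι] (M : Matrix ι κ ℝ) :
    Integrable (fun ξ ↦ M *ᵥ ξ) γ[κ] :=
  Integrable.of_eval fun i ↦ by
    simp only [mulVec, dotProduct]
    exact integrable_finsetSum _ fun k _ ↦ (integrable_eval_stdGaussian k).const_mul _

lemma integral_eval_mul_eq_integral_deriv [DecidableEq κ] (k : κ) {G G' : (κ → ℝ) → ℝ}
    (hG : ∀ ξ t, HasDerivAt (fun s ↦ G (update ξ k s)) (G' (update ξ k t)) t)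
    (hG_meas : Measurable G) (hG'_meas : Measurable G') {C C' : ℝ} (hGC : ∀ ξ, |G ξ| ≤ C)
    (hG'C : ∀ ξ, |G' ξ| ≤ C') :
    ∫ ξ, ξ k * G ξ ∂γ[κ] = ∫ ξ, G' ξ ∂γ[κ] := by
  have hint : Integrable (fun ξ ↦ ξ k * G ξ) γ[κ] :=
    (integrable_eval_stdGaussian k).mul_bdd hG_meas.aestronglyMeasurable (ae_of_all _ hGC)
  have hint' : Integrable G' γ[κ] :=
    .of_bound hG'_meas.aestronglyMeasurable C' (ae_of_all _ hG'C)
  rw [integral_pi_eq_integral_integral_update _ k hint,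
    integral_pi_eq_integral_integral_update _ k hint']
  refine integral_congr_ae (ae_of_all _ fun ξ ↦ ?_)
  simp only [update_self]
  exact integral_mul_gaussianReal_eq_integral_deriv (hG ξ) (fun t ↦ hGC _) (fun t ↦ hG'C _)

lemma hasDerivAt_mulVec_update [DecidableEq κ] (M : Matrix ι κ ℝ) (ξ : κ → ℝ) (k : κ) (t : ℝ)
    (j : ι) :
    HasDerivAt (fun s ↦ (M *ᵥ update ξ k s) j) (M j k) t := by
  simp only [mulVec, dotProduct]
  refine (HasDerivAt.fun_sum fun l _ ↦
    (hasDerivAt_pi.1 (hasDerivAt_update ξ k t) l).const_mul (M j l)).congr_deriv ?_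
  simp [Pi.single_apply]

variable [Fintype ι] [Nonempty ι] {w : ι → ℝ}

/-- Stein's identity `E[(N ξ)ᵢ pᵢ(M ξ)] = ∑ⱼ (N Mᵀ)ᵢⱼ E[∂ⱼpᵢ(M ξ)]`, with `∂ⱼpᵢ = pᵢ (δᵢⱼ - pⱼ)`. -/
lemma integral_mulVec_mul_softmax (hw : ∀ i, 0 < w i) (M N : Matrix ι κ ℝ) (i : ι) :
    ∫ ξ, (N *ᵥ ξ) i * softmax w (M *ᵥ ξ) i ∂γ[κ]
      = ∫ ξ, softmax w (M *ᵥ ξ) i *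
          ((N * Mᵀ) i i - ∑ j, (N * Mᵀ) i j * softmax w (M *ᵥ ξ) j) ∂γ[κ] := by
  classical
  set p : (κ → ℝ) → ι → ℝ := fun ξ ↦ softmax w (M *ᵥ ξ)
  have hp_cont (j : ι) : Continuous fun ξ ↦ p ξ j :=
    (continuous_softmax hw j).comp M.continuous_mulVec
  set G' : κ → (κ → ℝ) → ℝ := fun k ξ ↦ p ξ i * (M i k - ∑ j, p ξ j * M j k)
  have hG'_cont (k : κ) : Continuous (G' k) := by fun_prop
  have hG'_bound (k : κ) (ξ : κ → ℝ) : |G' k ξ| ≤ |M i k| + ‖fun j ↦ M j k‖ := by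
    rw [abs_mul]
    refine (mul_le_of_le_one_left (abs_nonneg _) (abs_softmax_le_one hw _ i)).trans ?_
    exact (abs_sub _ _).trans (add_le_add_right (abs_sum_softmax_mul_le hw _ _) _)
  have hstein (k : κ) : ∫ ξ, ξ k * p ξ i ∂γ[κ] = ∫ ξ, G' k ξ ∂γ[κ] :=
    integral_eval_mul_eq_integral_deriv k
      (fun ξ t ↦ hasDerivAt_softmax hw i fun j ↦ hasDerivAt_mulVec_update M ξ k t j)
      (hp_cont i).measurable (hG'_cont k).measurable (fun ξ ↦ abs_softmax_le_one hw _ i)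
      (hG'_bound k)
  have hint (k : κ) : Integrable (fun ξ ↦ ξ k * p ξ i) γ[κ] :=
    (integrable_eval_stdGaussian k).mul_bdd (hp_cont i).aestronglyMeasurable
      (ae_of_all _ fun ξ ↦ abs_softmax_le_one hw _ i)
  have hint' (k : κ) : Integrable (G' k) γ[κ] :=
    .of_bound (hG'_cont k).aestronglyMeasurable _ (ae_of_all _ (hG'_bound k))
  calc ∫ ξ, (N *ᵥ ξ) i * p ξ i ∂γ[κ] = ∑ k, N i k * ∫ ξ, ξ k * p ξ i ∂γ[κ] := by
        simp only [mulVec, dotProduct, Finset.sum_mul, mul_assoc]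
        rw [integral_finsetSum _ fun k _ ↦ (hint k).const_mul _]
        simp only [integral_const_mul]
    _ = ∑ k, N i k * ∫ ξ, G' k ξ ∂γ[κ] := by simp only [hstein]
    _ = ∫ ξ, ∑ k, N i k * G' k ξ ∂γ[κ] := by
        rw [integral_finsetSum _ fun k _ ↦ (hint' k).const_mul _]
        simp only [integral_const_mul]
    _ = _ := by
        congr 1; ext ξ
        simp only [G', mul_apply, transpose_apply, Finset.mul_sum, Finset.sum_mul, mul_sub,
          Finset.sum_sub_distrib]
        rw [Finset.sum_comm (γ := ι)]
        congr 1
        · exact Finset.sum_congr rfl fun k _ ↦ by ring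
        · exact Finset.sum_congr rfl fun j _ ↦ Finset.sum_congr rfl fun k _ ↦ by ring

end StdGaussian

section Interpolation

variable {ι κ : Type*} [Fintype κ]

lemma hasDerivAt_interpolation_mulVec (P Q : Matrix ι κ ℝ) (ξ : κ → ℝ) (θ : ℝ) (i : ι) :
    HasDerivAt (fun θ ↦ ((sin θ • P + cos θ • Q) *ᵥ ξ) i) (((cos θ • P - sin θ • Q) *ᵥ ξ) i) θ := by
  simp only [add_mulVec, sub_mulVec, smul_mulVec, Pi.add_apply, Pi.sub_apply,
    Pi.smul_apply, smul_eq_mul]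
  exact (((hasDerivAt_sin θ).mul_const _).add ((hasDerivAt_cos θ).mul_const _)).congr_deriv
    (by ring)

lemma interpolation_deriv_mul_transpose {P Q : Matrix ι κ ℝ} (hPQ : P * Qᵀ = 0) (θ : ℝ) :
    (cos θ • P - sin θ • Q) * (sin θ • P + cos θ • Q)ᵀ = (sin θ * cos θ) • (P * Pᵀ - Q * Qᵀ) := by
  have hQP : Q * Pᵀ = 0 := by rw [← transpose_transpose Q, ← transpose_mul, hPQ, transpose_zero]
  rw [transpose_add, transpose_smul, transpose_smul, Matrix.sub_mul, Matrix.mul_add,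
    Matrix.mul_add]
  simp only [Matrix.smul_mul, Matrix.mul_smul, hPQ, hQP, smul_zero, add_zero, zero_add, smul_smul]
  module

variable [Fintype ι]

lemma norm_interpolation_mulVec_le (P Q : Matrix ι κ ℝ) (ξ : κ → ℝ) (a b : ℝ) (ha : |a| ≤ 1)
    (hb : |b| ≤ 1) : ‖(a • P + b • Q) *ᵥ ξ‖ ≤ ‖P *ᵥ ξ‖ + ‖Q *ᵥ ξ‖ := by
  rw [add_mulVec, smul_mulVec, smul_mulVec]
  refine (norm_add_le _ _).trans (add_le_add ?_ ?_) <;> rw [norm_smul]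
  · exact mul_le_of_le_one_left (norm_nonneg _) ha
  · exact mul_le_of_le_one_left (norm_nonneg _) hb

variable [Nonempty ι] {w : ι → ℝ}

lemma hasDerivAt_integral_logSumExp_interpolation (hw : ∀ i, 0 < w i) (P Q : Matrix ι κ ℝ)
    (θ₀ : ℝ) :
    HasDerivAt (fun θ ↦ ∫ ξ, logSumExp w ((sin θ • P + cos θ • Q) *ᵥ ξ) ∂γ[κ])
      (∫ ξ, ∑ i, softmax w ((sin θ₀ • P + cos θ₀ • Q) *ᵥ ξ) i *
        ((cos θ₀ • P - sin θ₀ • Q) *ᵥ ξ) i ∂γ[κ]) θ₀ := by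
  have hbound_int : Integrable (fun ξ ↦ ‖P *ᵥ ξ‖ + ‖Q *ᵥ ξ‖) γ[κ] :=
    (integrable_mulVec_stdGaussian P).norm.add (integrable_mulVec_stdGaussian Q).norm
  have hF_meas (M : Matrix ι κ ℝ) : AEStronglyMeasurable (fun ξ ↦ logSumExp w (M *ᵥ ξ)) γ[κ] :=
    ((continuous_logSumExp hw).comp M.continuous_mulVec).aestronglyMeasurable
  have hF_int : Integrable (fun ξ ↦ logSumExp w ((sin θ₀ • P + cos θ₀ • Q) *ᵥ ξ)) γ[κ] := by
    refine ((integrable_const |logSumExp w 0|).add hbound_int).mono' (hF_meas _)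
      (ae_of_all _ fun ξ ↦ ?_)
    set x := (sin θ₀ • P + cos θ₀ • Q) *ᵥ ξ
    have hlip := abs_logSumExp_sub_le hw x 0
    have hx := norm_interpolation_mulVec_le P Q ξ _ _ (abs_sin_le_one θ₀) (abs_cos_le_one θ₀)
    rw [sub_zero] at hlip
    rw [norm_eq_abs, Pi.add_apply]
    linarith [abs_sub_abs_le_abs_sub (logSumExp w x) (logSumExp w 0)]
  refine (hasDerivAt_integral_of_dominated_loc_of_deriv_le (𝕜 := ℝ)
    (F := fun θ ξ ↦ logSumExp w ((sin θ • P + cos θ • Q) *ᵥ ξ))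
    (F' := fun θ ξ ↦ ∑ i, softmax w ((sin θ • P + cos θ • Q) *ᵥ ξ) i *
      ((cos θ • P - sin θ • Q) *ᵥ ξ) i)
    Filter.univ_mem (.of_forall fun θ ↦ hF_meas _) hF_int ?_ ?_ hbound_int ?_).2
  · exact (continuous_finsetSum _ fun i _ ↦
      ((continuous_softmax hw i).comp (continuous_mulVec _)).mul
        ((continuous_apply i).comp (continuous_mulVec _))).aestronglyMeasurable
  · refine ae_of_all _ fun ξ θ _ ↦ (abs_sum_softmax_mul_le hw _ _).trans ?_
    rw [sub_eq_add_neg, ← neg_smul]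
    exact norm_interpolation_mulVec_le P Q ξ _ _ (abs_cos_le_one θ)
      (by simpa using abs_sin_le_one θ)
  · exact ae_of_all _ fun ξ θ _ ↦
      hasDerivAt_logSumExp hw fun i ↦ hasDerivAt_interpolation_mulVec P Q ξ θ i

lemma integral_interpolation_deriv_nonpos (hw : ∀ i, 0 < w i) {P Q : Matrix ι κ ℝ}
    (hPQ : P * Qᵀ = 0) (hdiag : ∀ i, (P * Pᵀ) i i = (Q * Qᵀ) i i)
    (hoff : ∀ i j, i ≠ j → (Q * Qᵀ) i j ≤ (P * Pᵀ) i j) {θ : ℝ} (hs : 0 ≤ sin θ)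
    (hc : 0 ≤ cos θ) :
    ∫ ξ, ∑ i, softmax w ((sin θ • P + cos θ • Q) *ᵥ ξ) i *
      ((cos θ • P - sin θ • Q) *ᵥ ξ) i ∂γ[κ] ≤ 0 := by
  set M := sin θ • P + cos θ • Q
  set N := cos θ • P - sin θ • Q
  have hp_meas (i : ι) : AEStronglyMeasurable (fun ξ ↦ softmax w (M *ᵥ ξ) i) γ[κ] :=
    ((continuous_softmax hw i).comp M.continuous_mulVec).aestronglyMeasurable
  rw [integral_finsetSum _ fun i _ ↦ ((integrable_mulVec_stdGaussian N).eval i).bdd_mul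
    (hp_meas i) (ae_of_all _ fun ξ ↦ abs_softmax_le_one hw _ i)]
  refine Finset.sum_nonpos fun i _ ↦ ?_
  simp_rw [mul_comm (softmax w _ i)]
  rw [integral_mulVec_mul_softmax hw M N i, interpolation_deriv_mul_transpose hPQ]
  refine integral_nonpos fun ξ ↦ show _ ≤ (0 : ℝ) from ?_
  have hC (j : ι) : 0 ≤ ((sin θ * cos θ) • (P * Pᵀ - Q * Qᵀ)) i j := by
    rw [Matrix.smul_apply, Matrix.sub_apply, smul_eq_mul]
    rcases eq_or_ne i j with rfl | hij
    · rw [hdiag, sub_self, mul_zero]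
    · exact mul_nonneg (mul_nonneg hs hc) (sub_nonneg.2 (hoff i j hij))
  have hnonneg (j : ι) : 0 ≤ softmax w (M *ᵥ ξ) j := softmax_nonneg (fun j ↦ (hw j).le) _ j
  rw [Matrix.smul_apply, Matrix.sub_apply, hdiag, sub_self, smul_zero, zero_sub, mul_neg]
  exact neg_nonpos.2 (mul_nonneg (hnonneg i)
    (Finset.sum_nonneg fun j _ ↦ mul_nonneg (hC j) (hnonneg j)))

theorem integral_logSumExp_mulVec_le (hw : ∀ i, 0 < w i) {P Q : Matrix ι κ ℝ}
    (hPQ : P * Qᵀ = 0) (hdiag : ∀ i, (P * Pᵀ) i i = (Q * Qᵀ) i i)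
    (hoff : ∀ i j, i ≠ j → (Q * Qᵀ) i j ≤ (P * Pᵀ) i j) :
    ∫ ξ, logSumExp w (P *ᵥ ξ) ∂γ[κ] ≤ ∫ ξ, logSumExp w (Q *ᵥ ξ) ∂γ[κ] := by
  set φ := fun θ ↦ ∫ ξ, logSumExp w ((sin θ • P + cos θ • Q) *ᵥ ξ) ∂γ[κ]
  have hφ := hasDerivAt_integral_logSumExp_interpolation hw P Q
  have hanti : AntitoneOn φ (Set.Icc 0 (π / 2)) := by
    refine antitoneOn_of_deriv_nonpos (convex_Icc _ _)
      (fun θ _ ↦ (hφ θ).continuousAt.continuousWithinAt)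
      (fun θ _ ↦ (hφ θ).differentiableAt.differentiableWithinAt) fun θ hθ ↦ ?_
    rw [interior_Icc] at hθ
    rw [(hφ θ).deriv]
    exact integral_interpolation_deriv_nonpos hw hPQ hdiag hoff
      (sin_nonneg_of_nonneg_of_le_pi hθ.1.le (by linarith [hθ.2, pi_pos]))
      (cos_nonneg_of_mem_Icc ⟨by linarith [hθ.1, pi_pos], hθ.2.le⟩)
  have := hanti (Set.left_mem_Icc.2 (by positivity)) (Set.right_mem_Icc.2 (by positivity))
    (by positivity)
  simpa [φ] using this

end Interpolation

section SumIndex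

variable {ι ι' κ : Type*} [Fintype ι] [Fintype ι'] [Fintype κ]

lemma map_mulVec_stdGaussian_eq_map_fromCols_zero (A : Matrix κ ι ℝ) :
    (γ[ι]).map A.mulVec = (γ[ι ⊕ ι']).map (fromCols A (0 : Matrix κ ι' ℝ)).mulVec := by
  have hmp : MeasurePreserving (fun ξ : ι ⊕ ι' → ℝ ↦ ξ ∘ Sum.inl) γ[ι ⊕ ι'] γ[ι] :=
    measurePreserving_fst.comp (measurePreserving_sumPiEquivProdPi _)
  rw [← hmp.map_eq, Measure.map_map (continuous_mulVec _).measurable hmp.measurable]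
  congr 1
  ext ξ : 1
  simp

lemma map_mulVec_stdGaussian_eq_map_zero_fromCols (B : Matrix κ ι' ℝ) :
    (γ[ι']).map B.mulVec = (γ[ι ⊕ ι']).map (fromCols (0 : Matrix κ ι ℝ) B).mulVec := by
  have hmp : MeasurePreserving (fun ξ : ι ⊕ ι' → ℝ ↦ ξ ∘ Sum.inr) γ[ι ⊕ ι'] γ[ι'] :=
    measurePreserving_snd.comp (measurePreserving_sumPiEquivProdPi _)
  rw [← hmp.map_eq, Measure.map_map (continuous_mulVec _).measurable hmp.measurable]
  congr 1
  ext ξ : 1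
  simp

end SumIndex

end

/-- **Guerra–Toninelli comparison.** If the two centered Gaussian vectors `X, Y`
have equal variances and `C^X_{ij} ≥ C^Y_{ij}` off the diagonal, then
`E[log Σ wᵢ e^{Yᵢ}] ≥ E[log Σ wᵢ e^{Xᵢ}]`. -/
theorem guerra_toninelli_comparison (n : ℕ) (μX μY : Measure (Fin n → ℝ))
    (CX CY : Matrix (Fin n) (Fin n) ℝ)
    (hX : IsCenteredGaussian n μX CX) (hY : IsCenteredGaussian n μY CY)
    (w : Fin n → ℝ) (hw : ∀ i, 0 < w i)
    (hdiag : ∀ i, CX i i = CY i i)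
    (hoff : ∀ i j, i ≠ j → CY i j ≤ CX i j) :
    (∫ x, Real.log (∑ i, w i * Real.exp (x i)) ∂μX)
      ≤ ∫ y, Real.log (∑ i, w i * Real.exp (y i)) ∂μY := by
  obtain ⟨A, rfl, rfl⟩ := hX
  obtain ⟨B, rfl, rfl⟩ := hY
  rcases isEmpty_or_nonempty (Fin n) with _ | _
  · simp -- both integrands are `log 0 = 0`
  have hPQ : fromCols A (0 : Matrix (Fin n) (Fin n) ℝ) *
      (fromCols (0 : Matrix (Fin n) (Fin n) ℝ) B)ᵀ = 0 := by
    simp [transpose_fromCols, fromCols_mul_fromRows]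
  have hmeas := (continuous_logSumExp hw).measurable
  rw [stdGaussianPi, map_mulVec_stdGaussian_eq_map_fromCols_zero (ι' := Fin n) A,
    map_mulVec_stdGaussian_eq_map_zero_fromCols (ι := Fin n) B]
  change ∫ x, logSumExp w x ∂_ ≤ ∫ y, logSumExp w y ∂_
  rw [integral_map (continuous_mulVec _).aemeasurable hmeas.aestronglyMeasurable,
    integral_map (continuous_mulVec _).aemeasurable hmeas.aestronglyMeasurable]
  exact integral_logSumExp_mulVec_le hw hPQ
    (by simpa [transpose_fromCols, fromCols_mul_fromRows] using hdiag)
    (by simpa [transpose_fromCols, fromCols_mul_fromRows] using hoff)
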